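/- Let u and v be freely reduced words in the letters A ∪ A^{-1} with |v|_{g+1}^{simple} = 0, and let w be the unique reduced word representing the element uv of the free group F_g. Then |w|_{g+1}^{simple} ≤ |u|_{g+1}^{simple} + 1. -/

import Mathlib

/-- A letter of the alphabet `A ∪ A⁻¹`: a generator index together with a sign. -/
abbrev Letter (g : ℕ) := Fin g × Bool

/-- The formal inverse of a letter. -/
def Letter.inv {g : ℕ} (a : Letter g) : Letter g := (a.1, !a.2)

/-- A word is (freely) reduced if it equals its free reduction. -/
def IsReducedWord {g : ℕ} (w : List (Letter g)) : Prop :=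
  FreeGroup.reduce w = w

/-- The Whitehead graph of a word `x`: vertices are the letters `A ∪ A⁻¹`, and each
pair of consecutive letters `a b` occurring in `x` contributes an edge from `a` to `b⁻¹`. -/
def whiteheadGraph (g : ℕ) (x : List (Letter g)) : SimpleGraph (Letter g) where
  Adj u v := u ≠ v ∧ ([u, Letter.inv v] <:+: x ∨ [v, Letter.inv u] <:+: x)
  symm := by
    constructor
    intro u v h
    exact ⟨Ne.symm h.1, h.2.symm⟩
  loopless := by
    constructor
    intro u h
    exact h.1 rfl

/-- A graph has a cut vertex if it is disconnected, or some vertex can be removed to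
disconnect it. -/
def HasCutVertex {V : Type*} (G : SimpleGraph V) : Prop :=
  ¬ G.Connected ∨ ∃ v : V, ¬ (G.induce {u | u ≠ v}).Connected

/-- The simple `(g+1)`-length of a reduced word `w`: it is `0` if the Whitehead graph of
`w` has a cut vertex, and otherwise the greatest `t` such that `w` is a concatenation of
`t` subwords each of whose Whitehead graphs has no cut vertex. -/
noncomputable def simpleLength (g : ℕ) (w : List (Letter g)) : ℕ :=
  letI := Classical.propDecidable (HasCutVertex (whiteheadGraph g w))
  if HasCutVertex (whiteheadGraph g w) then 0
  else sSup {t : ℕ | ∃ ws : List (List (Letter g)),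
    ws.length = t ∧ ws.flatten = w ∧
    ∀ u ∈ ws, ¬ HasCutVertex (whiteheadGraph g u)}

/-
The reduced form of `u v` is `u' v'` with `u'` a prefix of `u` and `v'` a suffix of `v`, since
only a suffix of `u` cancels against a prefix of `v`. Whitehead graphs grow with subwords, so
`|v|ₛ = 0` means that every subword of `v` has a cut vertex. Hence in a decomposition of `u' v'`
into pieces without cut vertices the last piece is not contained in `v'`, so all the other pieces
lie in `u'`; absorbing the rest of `u` into the last of them decomposes `u` into one piece fewer.
-/

lemma exists_reduce_append_eq_prefix_append_suffix {α : Type*} [DecidableEq α]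
    {u v : List (α × Bool)}
    (hu : FreeGroup.IsReduced u) (hv : FreeGroup.IsReduced v) :
    ∃ u' v', u' <+: u ∧ v' <:+ v ∧ FreeGroup.reduce (u ++ v) = u' ++ v' := by
  induction u using List.reverseRecOn generalizing v with
  | nil => exact ⟨[], v, List.nil_prefix, List.suffix_rfl, hv.reduce_eq⟩
  | append_singleton u a ih =>
    rcases v with _ | ⟨b, v⟩
    · exact ⟨u ++ [a], [], List.prefix_rfl, List.suffix_rfl, by simpa using hu.reduce_eq⟩
    by_cases hab : b = (a.1, !a.2)
    · subst hab
      obtain ⟨u', v', hu', hv', h⟩ :=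
        ih (hu.infix (List.prefix_append u [a]).isInfix) (hv.infix (List.suffix_cons _ v).isInfix)
      refine ⟨u', v', hu'.trans (List.prefix_append _ _), hv'.trans (List.suffix_cons _ _), ?_⟩
      rw [← h, List.append_assoc, List.singleton_append]
      exact FreeGroup.reduce.Step.eq FreeGroup.Red.Step.not
    · refine ⟨u ++ [a], b :: v, List.prefix_rfl, List.suffix_rfl, ?_⟩
      refine FreeGroup.IsReduced.reduce_eq (List.isChain_append.2 ⟨hu, hv, ?_⟩)
      simp only [List.getLast?_append, List.getLast?_singleton, Option.some_or, Option.mem_def,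
        Option.some.injEq, List.head?_cons, forall_eq']
      obtain ⟨i, s⟩ := a
      obtain ⟨j, t⟩ := b
      rintro (rfl : i = j)
      cases s <;> cases t <;> simp_all

variable {g : ℕ}

lemma isReducedWord_iff_isReduced {w : List (Letter g)} :
    IsReducedWord w ↔ FreeGroup.IsReduced w :=
  FreeGroup.isReduced_iff_reduce_eq.symm

lemma whiteheadGraph_mono {x y : List (Letter g)} (h : x <:+: y) :
    whiteheadGraph g x ≤ whiteheadGraph g y :=
  fun _ _ hadj => ⟨hadj.1, hadj.2.imp (·.trans h) (·.trans h)⟩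

lemma whiteheadGraph_nil : whiteheadGraph g [] = ⊥ := by
  ext a b
  simp [whiteheadGraph]

lemma not_hasCutVertex_of_le {V : Type*} {G H : SimpleGraph V} (h : G ≤ H)
    (hG : ¬ HasCutVertex G) : ¬ HasCutVertex H := by
  simp only [HasCutVertex, not_or, not_exists, not_not] at hG ⊢
  exact ⟨hG.1.mono h, fun v => (hG.2 v).mono (SimpleGraph.comap_monotone _ h)⟩

lemma not_hasCutVertex_whiteheadGraph_of_infix {x y : List (Letter g)} (h : x <:+: y)
    (hx : ¬ HasCutVertex (whiteheadGraph g x)) : ¬ HasCutVertex (whiteheadGraph g y) :=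
  not_hasCutVertex_of_le (whiteheadGraph_mono h) hx

lemma ne_nil_of_not_hasCutVertex {x : List (Letter g)}
    (hx : ¬ HasCutVertex (whiteheadGraph g x)) : x ≠ [] := by
  rintro rfl
  refine hx (Or.inl fun hconn => ?_)
  obtain ⟨i, b⟩ := hconn.nonempty.some
  have := hconn.preconnected (i, b) (i, !b)
  rw [whiteheadGraph_nil, SimpleGraph.reachable_bot] at this
  cases b <;> simp at this

lemma length_le_length_flatten {α : Type*} {ws : List (List α)} (h : ∀ x ∈ ws, x ≠ []) :
    ws.length ≤ ws.flatten.length := by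
  induction ws with
  | nil => rfl
  | cons x ws ih =>
    have hx : 0 < x.length := List.length_pos_iff.2 (h x List.mem_cons_self)
    simp only [List.length_cons, List.flatten_cons, List.length_append]
    have := ih fun y hy => h y (List.mem_cons_of_mem x hy)
    omega

lemma length_le_simpleLength {w : List (Letter g)} {ws : List (List (Letter g))}
    (hw : ws.flatten = w) (hws : ∀ x ∈ ws, ¬ HasCutVertex (whiteheadGraph g x)) :
    ws.length ≤ simpleLength g w := by
  rcases ws with _ | ⟨x, xs⟩
  · exact Nat.zero_le _
  have hw' : ¬ HasCutVertex (whiteheadGraph g w) :=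
    not_hasCutVertex_whiteheadGraph_of_infix (hw ▸ List.infix_append [] x xs.flatten)
      (hws x List.mem_cons_self)
  rw [simpleLength, if_neg hw']
  refine le_csSup ⟨w.length, ?_⟩ ⟨x :: xs, rfl, hw, hws⟩
  rintro t ⟨ws, rfl, rfl, h⟩
  exact length_le_length_flatten fun y hy => ne_nil_of_not_hasCutVertex (h y hy)

lemma simpleLength_le {w : List (Letter g)} {n : ℕ}
    (h : ∀ ws : List (List (Letter g)), ws.flatten = w →
      (∀ x ∈ ws, ¬ HasCutVertex (whiteheadGraph g x)) → ws.length ≤ n) :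
    simpleLength g w ≤ n := by
  rw [simpleLength]
  split_ifs
  · exact Nat.zero_le n
  · exact csSup_le' fun t ⟨ws, ht, hw, hws⟩ => ht ▸ h ws hw hws

lemma length_le_simpleLength_of_flatten_prefix {w : List (Letter g)}
    {ws : List (List (Letter g))}
    (hw : ws.flatten <+: w) (hws : ∀ x ∈ ws, ¬ HasCutVertex (whiteheadGraph g x)) :
    ws.length ≤ simpleLength g w := by
  obtain ⟨rest, rfl⟩ := hw
  rcases List.eq_nil_or_concat' ws with rfl | ⟨ws, p, rfl⟩
  · exact Nat.zero_le _
  have hp : ¬ HasCutVertex (whiteheadGraph g (p ++ rest)) :=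
    not_hasCutVertex_whiteheadGraph_of_infix (List.prefix_append p rest).isInfix (hws p (by simp))
  have := length_le_simpleLength (w := (ws ++ [p]).flatten ++ rest) (ws := ws ++ [p ++ rest])
    (by simp) fun x hx => by
      rcases List.mem_append.1 hx with hx | hx
      · exact hws x (by simp [hx])
      · exact List.mem_singleton.1 hx ▸ hp
  simpa using this

lemma hasCutVertex_of_infix_of_simpleLength_eq_zero {v x : List (Letter g)}
    (hv : simpleLength g v = 0) (hx : x <:+: v) : HasCutVertex (whiteheadGraph g x) := by
  by_contra hx'
  have := length_le_simpleLength (w := v) (ws := [v]) (by simp)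
    (by simpa using not_hasCutVertex_whiteheadGraph_of_infix hx hx')
  simp [hv] at this

theorem simpleLength_mul_le_of_eq_zero_general (g : ℕ)
    (u v : List (Letter g)) (hu : IsReducedWord u) (hv : IsReducedWord v)
    (hv0 : simpleLength g v = 0) :
    simpleLength g (FreeGroup.reduce (u ++ v)) ≤ simpleLength g u + 1 := by
  obtain ⟨u', v', hu', hv', hw⟩ := exists_reduce_append_eq_prefix_append_suffix
    (isReducedWord_iff_isReduced.1 hu) (isReducedWord_iff_isReduced.1 hv)
  refine simpleLength_le fun ws hflat hws => ?_
  rcases List.eq_nil_or_concat' ws with rfl | ⟨ws, last, rfl⟩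
  · simp
  rw [hw, List.flatten_append, List.flatten_singleton] at hflat
  rcases List.append_eq_append_iff.1 hflat with ⟨a, rfl, -⟩ | ⟨c, -, rfl⟩
  · have := length_le_simpleLength_of_flatten_prefix ((List.prefix_append _ a).trans hu')
      fun x hx => hws x (by simp [hx])
    simpa using this
  · have hlast : last <:+: v := ((List.suffix_append c last).trans hv').isInfix
    exact absurd (hasCutVertex_of_infix_of_simpleLength_eq_zero hv0 hlast) (hws last (by simp))

/-- If `u, v` are freely reduced words with `|v|ₛ = 0` and `w` is the unique reduced word
representing the element `uv` of `F_g`, then `|w|ₛ ≤ |u|ₛ + 1`. -/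
theorem simpleLength_mul_le_of_eq_zero (g : ℕ) (hg : 2 ≤ g)
    (u v : List (Letter g)) (hu : IsReducedWord u) (hv : IsReducedWord v)
    (hv0 : simpleLength g v = 0) :
    simpleLength g (FreeGroup.reduce (u ++ v)) ≤ simpleLength g u + 1 :=
  simpleLength_mul_le_of_eq_zero_general g u v hu hv hv0
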